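/- arXiv:2501.05083 — 2 statements merged into one kernel-verified Lean document; each statement's English description precedes it below -/
import Mathlib

section
/- Let N ≥ 5 be an integer, let S > 0 and K ∈ ℝ be real numbers, and let b ≥ b* := (2/(N-2))·((N-4)/(N-2))^{(N-4)/2}·S^{-N/2}. Define h(t) := (1/2)t² + (b/4)t⁴ + K - ((N-2)/(2N))·S^{-N/(N-2)}·t^{2N/(N-2)} for t ≥ 0. Then h'(t) ≥ 0 for all t ≥ 0; in particular h is nondecreasing on [0, ∞). -/
/-!
The derivative is `h'(t) = t + b t³ - c t^q` with `c = S^(-N/(N-2))` and `q = (N+2)/(N-2)`, and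
`q = θ·1 + w·3` for the weights `θ = (N-4)/(N-2)`, `w = 2/(N-2)`. Weighted AM–GM applied to
`t/θ` and `b t³/w` gives `c t^θ (t³)^w ≤ t + b t³` as soon as `b ≥ w θ^(θ/w) c^(1/w)`, and for
this `c` that threshold is exactly `b*`.
-/

open Real

theorem mul_rpow_mul_rpow_le_add {θ w c b x y : ℝ} (hθ : 0 < θ) (hw : 0 < w) (hθw : θ + w = 1)
    (hc : 0 ≤ c) (hx : 0 ≤ x) (hy : 0 ≤ y) (hb : w * θ ^ (θ / w) * c ^ (1 / w) ≤ b) :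
    c * x ^ θ * y ^ w ≤ x + b * y := by
  set b₀ := w * θ ^ (θ / w) * c ^ (1 / w)
  have hb₀y : b₀ * y / w = θ ^ (θ / w) * c ^ (1 / w) * y := by
    simp only [b₀]; field_simp
  have key : (x / θ) ^ θ * (b₀ * y / w) ^ w = c * x ^ θ * y ^ w := by
    rw [hb₀y, mul_rpow (by positivity) hy, mul_rpow (by positivity) (by positivity),
      ← rpow_mul hθ.le, ← rpow_mul hc, div_mul_cancel₀ _ hw.ne', one_div_mul_cancel hw.ne',
      rpow_one, div_rpow hx hθ.le]
    field_simp
  calc c * x ^ θ * y ^ w = (x / θ) ^ θ * (b₀ * y / w) ^ w := key.symm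
    _ ≤ θ * (x / θ) + w * (b₀ * y / w) :=
      geom_mean_le_arith_mean2_weighted hθ.le hw.le (by positivity) (by positivity) hθw
    _ = x + b₀ * y := by field_simp
    _ ≤ x + b * y := by gcongr

theorem mul_rpow_le_add_mul_pow_three {θ w c b t : ℝ} (hθ : 0 < θ) (hw : 0 < w)
    (hθw : θ + w = 1) (hc : 0 ≤ c) (ht : 0 ≤ t) (hb : w * θ ^ (θ / w) * c ^ (1 / w) ≤ b) :
    c * t ^ (θ + 3 * w) ≤ t + b * t ^ 3 := by
  have h := mul_rpow_mul_rpow_le_add hθ hw hθw hc ht (pow_nonneg ht 3) hb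
  rw [← rpow_natCast, ← rpow_mul ht, mul_assoc, ← rpow_add' ht (by positivity)] at h
  exact_mod_cast h

theorem hasDerivAt_half_sq_add_quartic_sub_rpow {a b K p : ℝ} (hp : 1 ≤ p) (t : ℝ) :
    HasDerivAt (fun t : ℝ => 1 / 2 * t ^ 2 + b / 4 * t ^ 4 + K - a * t ^ p)
      (t + b * t ^ 3 - a * p * t ^ (p - 1)) t := by
  refine (((((hasDerivAt_pow 2 t).const_mul (1 / 2)).add
    ((hasDerivAt_pow 4 t).const_mul (b / 4))).add_const K).sub
    ((hasDerivAt_rpow_const (Or.inr hp)).const_mul a)).congr_deriv ?_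
  push_cast
  ring

theorem monotoneOn_Ici_of_hasDerivAt_nonneg {f f' : ℝ → ℝ} {a : ℝ}
    (hf : ∀ t, HasDerivAt f (f' t) t) (hf' : ∀ t, a ≤ t → 0 ≤ f' t) :
    MonotoneOn f (Set.Ici a) :=
  monotoneOn_of_hasDerivWithinAt_nonneg (convex_Ici a)
    (fun t _ => (hf t).continuousAt.continuousWithinAt)
    (fun t _ => (hf t).hasDerivWithinAt)
    (fun t ht => hf' t (interior_subset ht))

/-- For `N ≥ 5` and `b ≥ b* = (2/(N-2))·((N-4)/(N-2))^{(N-4)/2}·S^{-N/2}`, the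
comparison function `h(t) = t²/2 + b t⁴/4 + K - ((N-2)/(2N)) S^{-N/(N-2)} t^{2N/(N-2)}`
satisfies `h'(t) ≥ 0` for all `t ≥ 0`; in particular `h` is nondecreasing on `[0, ∞)`. -/
theorem comparison_function_h_monotone (N : ℕ) (hN : 5 ≤ N) (S K b : ℝ) (hS : 0 < S)
    (hb : b ≥ (2 / ((N : ℝ) - 2)) * (((N : ℝ) - 4) / ((N : ℝ) - 2)) ^ (((N : ℝ) - 4) / 2)
            * S ^ (-(N : ℝ) / 2))
    (h : ℝ → ℝ)
    (hh : h = fun t => (1 / 2) * t ^ 2 + (b / 4) * t ^ 4 + K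
            - (((N : ℝ) - 2) / (2 * (N : ℝ))) * S ^ (-(N : ℝ) / ((N : ℝ) - 2))
              * t ^ ((2 * (N : ℝ)) / ((N : ℝ) - 2))) :
    (∀ t : ℝ, 0 ≤ t → 0 ≤ deriv h t) ∧ MonotoneOn h (Set.Ici 0) := by
  have hn : (5 : ℝ) ≤ (N : ℝ) := by exact_mod_cast hN
  set n : ℝ := (N : ℝ)
  set θ := (n - 4) / (n - 2)
  set w := 2 / (n - 2)
  set c := S ^ (-n / (n - 2))
  set p := 2 * n / (n - 2)
  have hθ : 0 < θ := div_pos (by linarith) (by linarith)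
  have hw : 0 < w := div_pos two_pos (by linarith)
  have hn₂ : n - 2 ≠ 0 := by linarith
  have hθw : θ + w = 1 := by simp only [θ, w]; field_simp; ring
  have hp : p - 1 = θ + 3 * w := by simp only [p, θ, w]; field_simp; ring
  have hcp : (n - 2) / (2 * n) * c * p = c := by simp only [p]; field_simp
  have hbstar : w * θ ^ (θ / w) * c ^ (1 / w) = w * θ ^ ((n - 4) / 2) * S ^ (-n / 2) := by
    have hθ_div_w : θ / w = (n - 4) / 2 := by simp only [θ, w]; field_simp
    have hc_exp : -n / (n - 2) * (1 / w) = -n / 2 := by simp only [w]; field_simp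
    rw [hθ_div_w, ← rpow_mul hS.le, hc_exp]
  have hderiv : ∀ t, HasDerivAt h (t + b * t ^ 3 - c * t ^ (θ + 3 * w)) t := by
    intro t
    have h' := hasDerivAt_half_sq_add_quartic_sub_rpow (a := (n - 2) / (2 * n) * c) (b := b)
      (K := K) (p := p) (by linarith) t
    rwa [hcp, hp, ← hh] at h'
  have hderiv_nonneg : ∀ t, 0 ≤ t → 0 ≤ t + b * t ^ 3 - c * t ^ (θ + 3 * w) := fun t ht =>
    sub_nonneg.2 <| mul_rpow_le_add_mul_pow_three hθ hw hθw (by positivity) ht (hbstar ▸ hb)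
  exact ⟨fun t ht => (hderiv t).deriv ▸ hderiv_nonneg t ht,
    monotoneOn_Ici_of_hasDerivAt_nonneg hderiv hderiv_nonneg⟩
end

section
/- Let E be a real Banach space and let I : E → ℝ be continuously Fréchet differentiable. Let ρ > 0 and τ ∈ (0, ρ), write B̄_ρ := {u ∈ E : ‖u‖ ≤ ρ}, and let c := inf_{u ∈ B̄_ρ} I(u) be finite. Suppose there exists ε₀ > 0 such that every u ∈ B̄_ρ with I(u) ≤ c + ε₀ satisfies ‖u‖ ≤ ρ - τ. Then there exists a sequence {u_n} ⊂ B̄_ρ such that I(u_n) → c and ‖I'(u_n)‖_{E*} → 0 as n → ∞. -/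
/-! Ekeland's principle on the closed ball, itself a complete metric space, gives for every
`ε > 0` an `ε`-almost minimizer `v` with `I v ≤ I w + ε ‖w - v‖` for all `w` in the ball. Since
almost minimizers stay at distance `τ` from the sphere, this inequality holds on a whole
neighbourhood of `v`, which forces `‖I' v‖ ≤ ε`; take `ε = ε₀ / (n + 1)`.

Ekeland's principle itself: pick `uₙ₊₁` nearly minimizing `f` on
`S (uₙ) = {y | f y + ε d(y, uₙ) ≤ f uₙ}`; these closed sets are nested with radii tending to `0`,
and the limit `v` of `uₙ` satisfies `S v = {v}`. -/

open Filter Topology Metric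

section EkelandSet

variable {X : Type*} [MetricSpace X] {f : X → ℝ} {ε : ℝ} {x y : X}

def ekelandSet (f : X → ℝ) (ε : ℝ) (x : X) : Set X := {y | f y + ε * dist y x ≤ f x}

theorem self_mem_ekelandSet (f : X → ℝ) (ε : ℝ) (x : X) : x ∈ ekelandSet f ε x := by
  simp [ekelandSet]

theorem ekelandSet_subset (hε : 0 ≤ ε) (hy : y ∈ ekelandSet f ε x) :
    ekelandSet f ε y ⊆ ekelandSet f ε x := fun z (hz : f z + ε * dist z y ≤ f y) => by
  have := mul_le_mul_of_nonneg_left (dist_triangle z y x) hε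
  change f z + ε * dist z x ≤ f x
  linarith [show f y + ε * dist y x ≤ f x from hy]

theorem isClosed_ekelandSet (hf : LowerSemicontinuous f) (ε : ℝ) (x : X) :
    IsClosed (ekelandSet f ε x) :=
  (hf.add (continuous_const.mul (continuous_id.dist continuous_const)).lowerSemicontinuous
    ).isClosed_preimage (f x)

theorem ekelandSet_subset_closedBall (hε : 0 < ε) (hbdd : BddBelow (Set.range f)) {δ : ℝ}
    (hy : y ∈ ekelandSet f ε x) (hδ : f y < sInf (f '' ekelandSet f ε x) + ε * δ) :
    ekelandSet f ε y ⊆ closedBall y δ := fun z hz => by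
  have hinf : sInf (f '' ekelandSet f ε x) ≤ f z :=
    csInf_le (hbdd.mono (Set.image_subset_range _ _)) ⟨z, ekelandSet_subset hε.le hy hz, rfl⟩
  have : ε * dist z y < ε * δ := by linarith [show f z + ε * dist z y ≤ f y from hz]
  exact (lt_of_mul_lt_mul_left this hε.le).le

theorem exists_seq_ekelandSet_antitone (hε : 0 < ε) (hbdd : BddBelow (Set.range f)) (x₀ : X) :
    ∃ u : ℕ → X, u 0 ∈ ekelandSet f ε x₀ ∧
      (∀ n, ekelandSet f ε (u (n + 1)) ⊆ ekelandSet f ε (u n)) ∧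
      ∀ n, ekelandSet f ε (u n) ⊆ closedBall (u n) (1 / (n + 1)) := by
  have hnext : ∀ (n : ℕ) x, ∃ y ∈ ekelandSet f ε x,
      f y < sInf (f '' ekelandSet f ε x) + ε * (1 / (n + 1)) := fun n x => by
    obtain ⟨_, ⟨y, hy, rfl⟩, hlt⟩ := Real.lt_sInf_add_pos (s := f '' ekelandSet f ε x)
      ⟨f x, x, self_mem_ekelandSet f ε x, rfl⟩ (by positivity : 0 < ε * (1 / (n + 1 : ℝ)))
    exact ⟨y, hy, hlt⟩
  choose next hnext_mem hnext_lt using hnext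
  let u : ℕ → X := fun n => Nat.rec (next 0 x₀) (fun n x => next (n + 1) x) n
  refine ⟨u, hnext_mem 0 x₀, fun n => ekelandSet_subset hε.le (hnext_mem (n + 1) (u n)),
    fun n => ?_⟩
  cases n <;> exact ekelandSet_subset_closedBall hε hbdd (hnext_mem _ _) (hnext_lt _ _)

end EkelandSet

/-- The weak form of Ekeland's variational principle. -/
theorem exists_le_forall_le_add_mul_dist {X : Type*} [MetricSpace X] [CompleteSpace X]
    {f : X → ℝ} (hf : LowerSemicontinuous f) (hbdd : BddBelow (Set.range f)) {ε : ℝ}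
    (hε : 0 < ε) (x₀ : X) : ∃ v, f v ≤ f x₀ ∧ ∀ w, f v ≤ f w + ε * dist w v := by
  obtain ⟨u, hu0, hsucc, hball⟩ := exists_seq_ekelandSet_antitone hε hbdd x₀
  have hmem : ∀ n m, n ≤ m → u m ∈ ekelandSet f ε (u n) := fun n m hnm =>
    antitone_nat_of_succ_le (f := fun n => ekelandSet f ε (u n)) hsucc hnm
      (self_mem_ekelandSet f ε (u m))
  have hcauchy : CauchySeq u := cauchySeq_of_le_tendsto_0' (fun n : ℕ => 1 / (n + 1 : ℝ))
    (fun n m hnm => dist_comm (u n) (u m) ▸ hball n (hmem n m hnm))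
    tendsto_one_div_add_atTop_nhds_zero_nat
  obtain ⟨v, hv⟩ := cauchySeq_tendsto_of_complete hcauchy
  have hvS : ∀ n, v ∈ ekelandSet f ε (u n) := fun n =>
    (isClosed_ekelandSet hf ε (u n)).mem_of_tendsto hv
      ((eventually_ge_atTop n).mono fun m => hmem n m)
  refine ⟨v, ?_, fun w => ?_⟩
  · have hvx₀ : f v + ε * dist v x₀ ≤ f x₀ := ekelandSet_subset hε.le hu0 (hvS 0)
    nlinarith [dist_nonneg (x := v) (y := x₀)]
  by_contra! hw
  -- every such `w` lies in all the shrinking sets `ekelandSet f ε (u n)`, so `u` also tends to `w`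
  have hwS : w ∈ ekelandSet f ε v := hw.le
  have huw : Tendsto u atTop (𝓝 w) := tendsto_iff_dist_tendsto_zero.2 <|
    squeeze_zero (fun _ => dist_nonneg)
      (fun n => dist_comm w (u n) ▸ hball n (ekelandSet_subset hε.le (hvS n) hwS))
      tendsto_one_div_add_atTop_nhds_zero_nat
  obtain rfl := tendsto_nhds_unique huw hv
  simp at hw

theorem HasFDerivAt.norm_le_of_eventually_le_add_mul_norm {E : Type*} [NormedAddCommGroup E]
    [NormedSpace ℝ E] {f : E → ℝ} {f' : E →L[ℝ] ℝ} {x₀ : E} (hf : HasFDerivAt f f' x₀)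
    {C : ℝ} (hC : 0 ≤ C) (h : ∀ᶠ x in 𝓝 x₀, f x₀ ≤ f x + C * ‖x - x₀‖) : ‖f'‖ ≤ C := by
  refine le_of_forall_pos_le_add fun δ hδ => f'.opNorm_le_of_nhds_zero (by positivity) ?_
  rw [← map_add_left_nhds_zero x₀, eventually_map] at h
  have hlower : ∀ᶠ y in 𝓝 0, -((C + δ) * ‖y‖) ≤ f' y := by
    filter_upwards [Asymptotics.isLittleO_iff.1 (hasFDerivAt_iff_isLittleO_nhds_zero.1 hf) hδ, h]
      with y hy hyC
    rw [add_sub_cancel_left] at hyC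
    rw [Real.norm_eq_abs, abs_le] at hy
    linarith
  have hneg : Tendsto (fun y : E => -y) (𝓝 0) (𝓝 0) := by
    simpa using (continuous_neg (G := E)).tendsto 0
  filter_upwards [hlower, hneg.eventually hlower] with y hy hy'
  rw [map_neg, norm_neg] at hy'
  rw [Real.norm_eq_abs, abs_le]
  constructor <;> linarith

theorem exists_almost_min_norm_fderiv_le_of_isGLB {E : Type*} [NormedAddCommGroup E]
    [NormedSpace ℝ E] [CompleteSpace E] {I : E → ℝ} (hI : Differentiable ℝ I) {ρ τ c ε : ℝ}
    (hτ : 0 < τ) (hε : 0 < ε) (hc : IsGLB (I '' {u : E | ‖u‖ ≤ ρ}) c)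
    (hmin : ∀ u : E, ‖u‖ ≤ ρ → I u ≤ c + ε → ‖u‖ ≤ ρ - τ) :
    ∃ v : E, ‖v‖ ≤ ρ ∧ c ≤ I v ∧ I v ≤ c + ε ∧ ‖fderiv ℝ I v‖ ≤ ε := by
  set B : Set E := {u : E | ‖u‖ ≤ ρ}
  obtain ⟨_, ⟨x₀, hx₀B, rfl⟩, -, hx₀c⟩ := hc.exists_between (lt_add_of_pos_right c hε)
  have : CompleteSpace B := (isClosed_le continuous_norm continuous_const).completeSpace_coe
  have hbdd : BddBelow (Set.range fun u : B => I u) := Set.image_eq_range I B ▸ hc.bddBelow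
  obtain ⟨⟨v, hvB⟩, hvx₀, hv⟩ := exists_le_forall_le_add_mul_dist
    (hI.continuous.comp continuous_subtype_val).lowerSemicontinuous hbdd hε ⟨x₀, hx₀B⟩
  have hIv : I v ≤ c + ε := hvx₀.trans hx₀c.le
  refine ⟨v, hvB, hc.1 ⟨v, hvB, rfl⟩, hIv, ?_⟩
  -- `v` is at distance `τ` from the boundary, so Ekeland's inequality holds on a neighbourhood
  refine (hI v).hasFDerivAt.norm_le_of_eventually_le_add_mul_norm hε.le ?_
  filter_upwards [ball_mem_nhds v hτ] with w hw
  have hwB : ‖w‖ ≤ ρ := calc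
    ‖w‖ ≤ ‖v‖ + ‖w - v‖ := norm_le_norm_add_norm_sub' w v
    _ ≤ (ρ - τ) + τ := add_le_add (hmin v hvB hIv) (mem_ball_iff_norm.1 hw).le
    _ = ρ := by ring
  simpa [Subtype.dist_eq, dist_eq_norm] using hv ⟨w, hwB⟩

theorem ekeland_PS_sequence_on_ball_general
    {E : Type*} [NormedAddCommGroup E] [NormedSpace ℝ E] [CompleteSpace E]
    (I : E → ℝ) (hI : ContDiff ℝ 1 I)
    (ρ τ : ℝ) (hρ : 0 < ρ) (hτ : 0 < τ)
    (hbdd : BddBelow (I '' {u : E | ‖u‖ ≤ ρ}))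
    (c : ℝ) (hc : c = sInf (I '' {u : E | ‖u‖ ≤ ρ}))
    (ε₀ : ℝ) (hε₀ : 0 < ε₀)
    (hmin : ∀ u : E, ‖u‖ ≤ ρ → I u ≤ c + ε₀ → ‖u‖ ≤ ρ - τ) :
    ∃ u : ℕ → E, (∀ n, ‖u n‖ ≤ ρ) ∧
      Tendsto (fun n => I (u n)) atTop (nhds c) ∧
      Tendsto (fun n => ‖fderiv ℝ I (u n)‖) atTop (nhds 0) := by
  have hglb : IsGLB (I '' {u : E | ‖u‖ ≤ ρ}) c :=
    hc ▸ isGLB_csInf ⟨I 0, 0, by simpa using hρ.le, rfl⟩ hbdd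
  have hεn_le : ∀ n : ℕ, ε₀ / (n + 1) ≤ ε₀ := fun n =>
    div_le_self hε₀.le (le_add_of_nonneg_left n.cast_nonneg)
  choose u huB hcu hIu hdu using fun n : ℕ =>
    exists_almost_min_norm_fderiv_le_of_isGLB (hI.differentiable one_ne_zero) hτ
      (by positivity : 0 < ε₀ / (n + 1)) hglb
      fun v hv hIv => hmin v hv (hIv.trans (by linarith [hεn_le n]))
  have hεn : Tendsto (fun n : ℕ => ε₀ / (n + 1)) atTop (𝓝 0) := by
    simpa [div_eq_mul_inv] using tendsto_one_div_add_atTop_nhds_zero_nat.const_mul ε₀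
  refine ⟨u, huB, ?_, squeeze_zero (fun n => norm_nonneg _) hdu hεn⟩
  exact tendsto_of_tendsto_of_tendsto_of_le_of_le tendsto_const_nhds
    (by simpa using tendsto_const_nhds.add hεn) hcu hIu

/-- Ekeland-type construction of a Palais–Smale minimizing sequence on a ball:
if `I` is `C¹` on a Banach space `E`, `c = inf_{‖u‖ ≤ ρ} I(u)` is finite, and all
almost-minimizers over the closed ball of radius `ρ` stay in the ball of radius
`ρ - τ`, then there is a sequence `{u_n}` in the ball with `I(u_n) → c` and
`‖I'(u_n)‖_{E*} → 0`. -/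
theorem ekeland_PS_sequence_on_ball
    {E : Type*} [NormedAddCommGroup E] [NormedSpace ℝ E] [CompleteSpace E]
    (I : E → ℝ) (hI : ContDiff ℝ 1 I)
    (ρ τ : ℝ) (hρ : 0 < ρ) (hτ : 0 < τ) (hτρ : τ < ρ)
    (hbdd : BddBelow (I '' {u : E | ‖u‖ ≤ ρ}))
    (c : ℝ) (hc : c = sInf (I '' {u : E | ‖u‖ ≤ ρ}))
    (ε₀ : ℝ) (hε₀ : 0 < ε₀)
    (hmin : ∀ u : E, ‖u‖ ≤ ρ → I u ≤ c + ε₀ → ‖u‖ ≤ ρ - τ) :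
    ∃ u : ℕ → E, (∀ n, ‖u n‖ ≤ ρ) ∧
      Tendsto (fun n => I (u n)) atTop (nhds c) ∧
      Tendsto (fun n => ‖fderiv ℝ I (u n)‖) atTop (nhds 0) :=
  ekeland_PS_sequence_on_ball_general I hI ρ τ hρ hτ hbdd c hc ε₀ hε₀ hmin
end
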